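/- For any finite simple graph G, there exists a positive integer p such that the join G ∨ K_p is partially DP-nice. -/

import Mathlib

open SimpleGraph

/-- `DPCover G H L` means `(L, H)` is a cover of the graph `G`:
(1) the sets `L u` partition `V(H)`; (2) each `H[L u]` is complete;
(3) for each edge `uv` of `G`, the edges of `H` between `L u` and `L v` form a matching;
(4) there are no edges of `H` between lists of distinct non-adjacent vertices. -/
structure DPCover {V : Type} (G : SimpleGraph V) {W : Type} (H : SimpleGraph W)
    (L : V → Finset W) : Prop where
  partition : ∀ w : W, ∃! v : V, w ∈ L v
  cliques : ∀ v : V, ∀ a ∈ L v, ∀ b ∈ L v, a ≠ b → H.Adj a b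
  matching : ∀ ⦃u v : V⦄, G.Adj u v → ∀ a ∈ L u, ∀ b ∈ L v, ∀ b' ∈ L v,
      H.Adj a b → H.Adj a b' → b = b'
  nonadj : ∀ ⦃u v : V⦄, u ≠ v → ¬ G.Adj u v → ∀ a ∈ L u, ∀ b ∈ L v, ¬ H.Adj a b

/-- A finset is independent in `H` if no two of its elements are adjacent. -/
def IsIndepFinset {W : Type} (H : SimpleGraph W) (S : Finset W) : Prop :=
  ∀ a ∈ S, ∀ b ∈ S, ¬ H.Adj a b

/-- The independence number of `H`. -/
noncomputable def indepNum {W : Type} [Fintype W] (H : SimpleGraph W) : ℕ :=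
  sSup {n : ℕ | ∃ S : Finset W, IsIndepFinset H S ∧ S.card = n}

/-- The DP-chromatic number of `G`: the least `m` such that every `m`-fold cover `(L, H)`
of `G` admits an `H`-coloring, i.e. an independent set in `H` of size `|V(G)|`. -/
noncomputable def chiDP {V : Type} [Fintype V] (G : SimpleGraph V) : ℕ :=
  sInf {m : ℕ | ∀ (W : Type) (_ : Fintype W) (H : SimpleGraph W) (L : V → Finset W),
    DPCover G H L → (∀ v, (L v).card = m) →
    ∃ S : Finset W, IsIndepFinset H S ∧ S.card = Fintype.card V}

/-- The partial DP `t`-chromatic number of `G`: the minimum of the independence number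
`α(H)` over all `t`-fold covers `(L, H)` of `G`. -/
noncomputable def alphaDP {V : Type} [Fintype V] (G : SimpleGraph V) (t : ℕ) : ℕ :=
  sInf {n : ℕ | ∃ (W : Type) (_ : Fintype W) (H : SimpleGraph W) (L : V → Finset W),
    DPCover G H L ∧ (∀ v, (L v).card = t) ∧ _root_.indepNum H = n}

/-- A graph `G` is partially DP-nice if `α_t^{DP}(G) ≥ t|V(G)|/χ_DP(G)` for all
`t ∈ {1, …, χ_DP(G)}`. -/
def PartiallyDPNice {V : Type} [Fintype V] (G : SimpleGraph V) : Prop :=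
  ∀ t : ℕ, 1 ≤ t → t ≤ chiDP G →
    (t * Fintype.card V : ℚ) / (chiDP G : ℚ) ≤ (alphaDP G t : ℚ)

/-- The join `G ∨ K_p` of `G` with the complete graph `K_p`: disjoint copies of `G` and
`K_p` together with all edges between them. -/
def joinComplete {V : Type} (G : SimpleGraph V) (p : ℕ) : SimpleGraph (V ⊕ Fin p) where
  Adj x y :=
    match x, y with
    | .inl a, .inl b => G.Adj a b
    | .inr a, .inr b => a ≠ b
    | .inl _, .inr _ => True
    | .inr _, .inl _ => True
  symm := by
    constructor
    rintro (a | a) (b | b) h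
    · exact G.symm.symm _ _ h
    · trivial
    · trivial
    · exact Ne.symm h
  loopless := by
    constructor
    rintro (a | a) h
    · exact G.loopless.irrefl a h
    · exact h rfl

/-!
Write `χ_p = χ_DP(G ∨ K_p)` and `n = |V(G)|`. Since `K_p` is a clique, `p ≤ χ_p ≤ n + p`,
and since adding a dominating vertex raises the DP-chromatic number by at most one,
`χ_{p+1} ≤ χ_p + 1`. Hence `χ_p - p` is non-increasing and `χ_p = p + c` for all `p ≥ p₁`.

For `t ≥ c + p₁` write `t = q + c` with `q ≥ p₁`: every `t`-fold cover of `G ∨ K_p` restricts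
to a `χ_q`-fold cover of the induced copy of `G ∨ K_q`, which has an `H`-coloring, so
`α_t ≥ n + q`; and `t (n + p) ≤ (n + q)(p + c)` amounts to `(p - q)(n - c) ≥ 0`.
For smaller `t`, coloring greedily, starting with two non-adjacent vertices, gives
`α_t ≥ min (n + p) (t + 1)`, which is enough once `p ≥ (c + p₁) n`.
If `G` is complete, so is `G ∨ K_1`, and the greedy bound `α_t ≥ t` is all that is needed.
-/

open Finset

lemma IsIndepFinset.insert {W : Type} {H : SimpleGraph W} {S : Finset W} [DecidableEq W]
    (hS : IsIndepFinset H S) {x : W} (hx : ∀ w ∈ S, ¬ H.Adj x w) :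
    IsIndepFinset H (insert x S) := by
  intro a ha b hb
  rcases mem_insert.mp ha with rfl | ha' <;> rcases mem_insert.mp hb with rfl | hb'
  · exact H.irrefl
  · exact hx b hb'
  · exact fun hab => hx a ha' hab.symm
  · exact hS a ha' b hb'

lemma IsIndepFinset.card_le_indepNum {W : Type} [Fintype W] {H : SimpleGraph W}
    {S : Finset W} (hS : IsIndepFinset H S) : S.card ≤ _root_.indepNum H :=
  le_csSup ⟨Fintype.card W, by rintro n ⟨T, -, rfl⟩; exact T.card_le_univ⟩ ⟨S, hS, rfl⟩

namespace DPCover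

variable {V W : Type} {G : SimpleGraph V} {H : SimpleGraph W} {L : V → Finset W}

lemma eq_of_mem (hcov : DPCover G H L) {w : W} {u v : V} (hu : w ∈ L u) (hv : w ∈ L v) :
    u = v :=
  (hcov.partition w).unique hu hv

noncomputable def proj (hcov : DPCover G H L) (w : W) : V :=
  (hcov.partition w).exists.choose

lemma mem_proj (hcov : DPCover G H L) (w : W) : w ∈ L (hcov.proj w) :=
  (hcov.partition w).exists.choose_spec

lemma proj_eq (hcov : DPCover G H L) {w : W} {v : V} (h : w ∈ L v) : hcov.proj w = v :=
  hcov.eq_of_mem (hcov.mem_proj w) h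

lemma injOn_proj (hcov : DPCover G H L) {S : Finset W} (hS : IsIndepFinset H S) :
    Set.InjOn hcov.proj S := by
  intro x hx y hy hxy
  by_contra hne
  exact hS x hx y hy (hcov.cliques _ x (hcov.mem_proj x) y (hxy ▸ hcov.mem_proj y) hne)

lemma exists_mem_of_card_eq [Fintype V] (hcov : DPCover G H L) {S : Finset W}
    (hS : IsIndepFinset H S) (hcard : S.card = Fintype.card V) (v : V) : ∃ w ∈ S, w ∈ L v := by
  classical
  have himage : S.image hcov.proj = univ :=
    eq_univ_of_card _ (by rw [card_image_of_injOn (hcov.injOn_proj hS), hcard])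
  obtain ⟨w, hw, rfl⟩ := mem_image.mp (himage ▸ mem_univ v)
  exact ⟨w, hw, hcov.mem_proj w⟩

lemma card_filter_adj_le_one [DecidableRel H.Adj] (hcov : DPCover G H L) {u v : V}
    (huv : G.Adj u v) {w : W} (hw : w ∈ L u) : ((L v).filter (H.Adj w)).card ≤ 1 := by
  refine card_le_one.mpr fun b hb b' hb' => ?_
  rw [mem_filter] at hb hb'
  exact hcov.matching huv w hw b hb.1 b' hb'.1 hb.2 hb'.2

end DPCover

section Greedy

variable {V W : Type} {G : SimpleGraph V} {H : SimpleGraph W} {L : V → Finset W}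

/-- `S` is an `H`-coloring of the subgraph of `G` induced by `A`. -/
def IsColoringOn (H : SimpleGraph W) (L : V → Finset W) (A : Finset V) (S : Finset W) : Prop :=
  IsIndepFinset H S ∧ (∀ w ∈ S, ∃ v ∈ A, w ∈ L v) ∧ S.card = A.card

lemma DPCover.card_filter_exists_adj_le [DecidableRel G.Adj] [DecidableRel H.Adj] [DecidableEq W]
    (hcov : DPCover G H L) {A : Finset V} {S : Finset W} (hS : IsColoringOn H L A S)
    {a : V} (ha : a ∉ A) :
    ((L a).filter fun b => ∃ w ∈ S, H.Adj w b).card ≤ (A.filter (G.Adj a)).card := by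
  obtain ⟨hSind, hSA, -⟩ := hS
  have hproj : ∀ w ∈ S, hcov.proj w ∈ A := fun w hw => by
    obtain ⟨v, hv, hwv⟩ := hSA w hw
    rwa [hcov.proj_eq hwv]
  set S₁ := S.filter fun w => G.Adj a (hcov.proj w)
  have hblocked : ((L a).filter fun b => ∃ w ∈ S, H.Adj w b) ⊆
      S₁.biUnion fun w => (L a).filter (H.Adj w) := by
    intro b hb
    obtain ⟨hb, w, hw, hwb⟩ := mem_filter.mp hb
    have hadj : G.Adj a (hcov.proj w) := by
      by_contra hna
      exact hcov.nonadj (fun h : hcov.proj w = a => ha (h ▸ hproj w hw)) (fun h => hna h.symm)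
        w (hcov.mem_proj w) b hb hwb
    exact mem_biUnion.mpr ⟨w, mem_filter.mpr ⟨hw, hadj⟩, mem_filter.mpr ⟨hb, hwb⟩⟩
  calc _ ≤ ∑ w ∈ S₁, ((L a).filter (H.Adj w)).card :=
        (card_le_card hblocked).trans card_biUnion_le
    _ ≤ ∑ _w ∈ S₁, 1 := sum_le_sum fun w hw =>
        hcov.card_filter_adj_le_one (mem_filter.mp hw).2.symm (hcov.mem_proj w)
    _ = S₁.card := by rw [sum_const, smul_eq_mul, mul_one]
    _ ≤ (A.filter (G.Adj a)).card :=
        card_le_card_of_injOn hcov.proj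
          (fun w hw => mem_filter.mpr ⟨hproj w (mem_filter.mp hw).1, (mem_filter.mp hw).2⟩)
          ((hcov.injOn_proj hSind).mono (filter_subset _ _))

lemma DPCover.exists_isColoringOn_insert [DecidableEq V] [DecidableRel G.Adj]
    (hcov : DPCover G H L) {t : ℕ} (hL : ∀ v, (L v).card = t) {A : Finset V} {S : Finset W}
    (hS : IsColoringOn H L A S) {a : V} (ha : a ∉ A) (hdeg : (A.filter (G.Adj a)).card < t) :
    ∃ S', IsColoringOn H L (insert a A) S' := by
  classical
  obtain ⟨b, hb, hfree⟩ := exists_mem_notMem_of_card_lt_card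
    ((hcov.card_filter_exists_adj_le hS ha).trans_lt (hL a ▸ hdeg))
  have hbS : b ∉ S := fun h => by
    obtain ⟨v, hv, hbv⟩ := hS.2.1 b h
    exact ha (hcov.eq_of_mem hb hbv ▸ hv)
  refine ⟨insert b S, hS.1.insert fun w hw hbw => hfree (mem_filter.mpr ⟨hb, w, hw, hbw.symm⟩),
    fun w hw => ?_, by rw [card_insert_of_notMem hbS, card_insert_of_notMem ha, hS.2.2]⟩
  rcases mem_insert.mp hw with rfl | hw
  · exact ⟨a, mem_insert_self a A, hb⟩
  · obtain ⟨v, hv, hwv⟩ := hS.2.1 w hw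
    exact ⟨v, mem_insert_of_mem hv, hwv⟩

lemma DPCover.exists_isColoringOn_of_card_le (hcov : DPCover G H L) {t : ℕ}
    (hL : ∀ v, (L v).card = t) (A : Finset V) (hA : A.card ≤ t) :
    ∃ S, IsColoringOn H L A S := by
  classical
  induction A using Finset.induction_on with
  | empty => exact ⟨∅, by simp [IsColoringOn, IsIndepFinset]⟩
  | insert a A ha ih =>
    rw [card_insert_of_notMem ha] at hA
    obtain ⟨S, hS⟩ := ih (by omega)
    exact hcov.exists_isColoringOn_insert hL hS ha ((card_filter_le _ _).trans_lt (by omega))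

end Greedy

section DPColorable

variable {V : Type} [Fintype V] {G : SimpleGraph V}

/-- `chiDP G` is the infimum of the `m` with `DPColorable G m`. -/
def DPColorable (G : SimpleGraph V) (m : ℕ) : Prop :=
  ∀ (W : Type) (_ : Fintype W) (H : SimpleGraph W) (L : V → Finset W),
    DPCover G H L → (∀ v, (L v).card = m) →
    ∃ S : Finset W, IsIndepFinset H S ∧ S.card = Fintype.card V

lemma dpColorable_card (G : SimpleGraph V) : DPColorable G (Fintype.card V) := by
  intro W _ H L hcov hL
  obtain ⟨S, hS, -, hcard⟩ := hcov.exists_isColoringOn_of_card_le hL univ card_univ.le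
  exact ⟨S, hS, hcard.trans card_univ⟩

lemma dpColorable_chiDP (G : SimpleGraph V) : DPColorable G (chiDP G) :=
  Nat.sInf_mem (s := {m | DPColorable G m}) ⟨_, dpColorable_card G⟩

lemma chiDP_le_of_dpColorable {m : ℕ} (h : DPColorable G m) : chiDP G ≤ m :=
  Nat.sInf_le (s := {m | DPColorable G m}) h

lemma chiDP_le_card (G : SimpleGraph V) : chiDP G ≤ Fintype.card V :=
  chiDP_le_of_dpColorable (dpColorable_card G)

end DPColorable

/-- The cover whose `H`-colorings are the proper `t`-colorings of `G`. -/
lemma dpCover_boxProd_top {V : Type} (G : SimpleGraph V) (t : ℕ) :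
    DPCover G (G □ (⊤ : SimpleGraph (Fin t))) fun v => {v} ×ˢ univ := by
  have hmem : ∀ {v : V} {a : V × Fin t}, a ∈ ({v} ×ˢ univ : Finset _) ↔ a.1 = v := by
    simp only [mem_product, mem_singleton, mem_univ, and_true, implies_true]
  refine ⟨fun w => ⟨w.1, hmem.mpr rfl, fun v hv => (hmem.mp hv).symm⟩, ?_, ?_, ?_⟩
  · intro v a ha b hb hab
    have h₁ : a.1 = b.1 := (hmem.mp ha).trans (hmem.mp hb).symm
    exact Or.inr ⟨fun h₂ => hab (Prod.ext h₁ h₂), h₁⟩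
  · rintro u v huv ⟨x, i⟩ ha ⟨y, j⟩ hb ⟨z, k⟩ hb'
    rw [hmem] at ha hb hb'
    subst ha hb hb'
    simp only [boxProd_adj, huv, huv.ne, true_and, and_false, or_false]
    rintro rfl rfl
    rfl
  · rintro u v huv hnadj ⟨x, i⟩ ha ⟨y, j⟩ hb
    rw [hmem] at ha hb
    subst ha hb
    simp [boxProd_adj, hnadj, huv]

section Clique

variable {V : Type} [Fintype V] {G : SimpleGraph V}

lemma DPColorable.colorable {t : ℕ} (h : DPColorable G t) : G.Colorable t := by
  have hcov := dpCover_boxProd_top G t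
  obtain ⟨S, hS, hcard⟩ := h _ inferInstance _ _ hcov fun v => by simp
  choose w hwS hwL using hcov.exists_mem_of_card_eq hS hcard
  simp only [mem_product, mem_singleton, mem_univ, and_true] at hwL
  refine ⟨Coloring.mk (fun v => (w v).2) fun {u v} huv hc => hS _ (hwS u) _ (hwS v) ?_⟩
  exact Or.inl ⟨by rwa [hwL u, hwL v], hc⟩

lemma SimpleGraph.IsClique.card_le_chiDP {s : Finset V} (hs : G.IsClique s) :
    s.card ≤ chiDP G :=
  hs.card_le_of_colorable (dpColorable_chiDP G).colorable

lemma chiDP_top : chiDP (⊤ : SimpleGraph V) = Fintype.card V :=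
  (chiDP_le_card _).antisymm <| by
    have hclique : (⊤ : SimpleGraph V).IsClique ↑(univ : Finset V) := by
      rw [coe_univ]
      exact isClique_univ.mpr rfl
    simpa using hclique.card_le_chiDP

end Clique

section Alpha

variable {V : Type} [Fintype V] {G : SimpleGraph V}

lemma le_alphaDP {t b : ℕ} (h : ∀ (W : Type) (_ : Fintype W) (H : SimpleGraph W)
    (L : V → Finset W), DPCover G H L → (∀ v, (L v).card = t) →
      ∃ S : Finset W, IsIndepFinset H S ∧ b ≤ S.card) :
    b ≤ alphaDP G t := by
  obtain ⟨W, _, H, L, hcov, hL, hα⟩ := Nat.sInf_mem (s := {n | ∃ (W : Type) (_ : Fintype W)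
      (H : SimpleGraph W) (L : V → Finset W), DPCover G H L ∧ (∀ v, (L v).card = t) ∧
        _root_.indepNum H = n})
    ⟨_, _, inferInstance, _, _, dpCover_boxProd_top G t, fun v => by simp, rfl⟩
  obtain ⟨S, hS, hb⟩ := h W inferInstance H L hcov hL
  exact (hb.trans hS.card_le_indepNum).trans_eq hα

lemma min_card_le_alphaDP (G : SimpleGraph V) (t : ℕ) :
    min (Fintype.card V) t ≤ alphaDP G t := by
  refine le_alphaDP fun W _ H L hcov hL => ?_
  obtain ⟨A, -, hA⟩ := exists_subset_card_eq (s := (univ : Finset V))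
    (n := min (Fintype.card V) t) (by rw [card_univ]; exact min_le_left _ _)
  obtain ⟨S, hS, -, hcard⟩ := hcov.exists_isColoringOn_of_card_le hL A (hA ▸ min_le_right _ _)
  exact ⟨S, hS, (hcard.trans hA).ge⟩

lemma min_card_succ_le_alphaDP {u v : V} (huv : u ≠ v) (hnadj : ¬ G.Adj u v) {t : ℕ}
    (ht : 1 ≤ t) : min (Fintype.card V) (t + 1) ≤ alphaDP G t := by
  classical
  refine le_alphaDP fun W _ H L hcov hL => ?_
  have hpair : ({u, v} : Finset V).card = 2 := card_pair huv
  obtain ⟨A, hAuv, hA⟩ := exists_subset_card_eq (s := univ \ {u, v})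
    (n := min (Fintype.card V - 2) (t - 1))
    (by rw [card_sdiff_of_subset (subset_univ _), hpair, card_univ]; exact min_le_left _ _)
  have hAt : A.card < t := by omega
  have hvA : v ∉ A := fun h => by simpa using hAuv h
  have huA : u ∉ insert v A := by simpa [huv] using fun h => by simpa using hAuv h
  obtain ⟨S, hS⟩ := hcov.exists_isColoringOn_of_card_le hL A hAt.le
  obtain ⟨S, hS⟩ := hcov.exists_isColoringOn_insert hL hS hvA ((card_filter_le _ _).trans_lt hAt)
  obtain ⟨S, hS, -, hcard⟩ := hcov.exists_isColoringOn_insert hL hS huA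
    (by rw [filter_insert, if_neg hnadj]; exact (card_filter_le _ _).trans_lt hAt)
  refine ⟨S, hS, ?_⟩
  have := card_le_univ ({u, v} : Finset V)
  rw [hcard, card_insert_of_notMem huA, card_insert_of_notMem hvA, hA]
  omega

lemma partiallyDPNice_of_mul_le
    (h : ∀ t, 1 ≤ t → t ≤ chiDP G → t * Fintype.card V ≤ alphaDP G t * chiDP G) :
    PartiallyDPNice G := by
  intro t ht1 ht2
  rw [div_le_iff₀ (by exact_mod_cast ht1.trans ht2)]
  exact_mod_cast h t ht1 ht2

lemma partiallyDPNice_of_chiDP_eq_card (h : chiDP G = Fintype.card V) : PartiallyDPNice G :=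
  partiallyDPNice_of_mul_le fun t _ ht => by
    have hα := min_card_le_alphaDP G t
    rw [h] at ht ⊢
    rw [min_eq_right ht] at hα
    exact Nat.mul_le_mul_right _ hα

end Alpha

section Restrict

variable {V₁ V₂ W : Type} {G₁ : SimpleGraph V₁} {G₂ : SimpleGraph V₂} {H : SimpleGraph W}
  {L : V₁ → Finset W}

lemma DPCover.restrict (hcov : DPCover G₁ H L) (e : G₂ ↪g G₁) (K : V₂ → Finset W)
    [DecidablePred fun w => ∃ v, w ∈ K v] (hK : ∀ v, K v ⊆ L (e v)) :
    DPCover G₂ (H.comap (Subtype.val : {w // ∃ v, w ∈ K v} → W))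
      fun v => (K v).subtype fun w => ∃ v, w ∈ K v := by
  refine ⟨fun w => ?_, fun v a ha b hb hab => ?_, fun u v huv a ha b hb b' hb' h h' => ?_,
    fun u v huv hnadj a ha b hb => ?_⟩ <;> simp only [mem_subtype] at *
  · obtain ⟨v, hv⟩ := w.2
    exact ⟨v, hv, fun u hu => e.injective (hcov.eq_of_mem (hK u hu) (hK v hv))⟩
  · exact hcov.cliques (e v) _ (hK v ha) _ (hK v hb) (Subtype.val_injective.ne hab)
  · exact Subtype.val_injective <|
      hcov.matching (e.map_adj_iff.mpr huv) _ (hK u ha) _ (hK v hb) _ (hK v hb') h h'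
  · exact hcov.nonadj (e.injective.ne huv) (e.map_adj_iff.not.mpr hnadj)
      _ (hK u ha) _ (hK v hb)

lemma DPCover.exists_indep_of_embedding [Fintype V₂] [Fintype W] (hcov : DPCover G₁ H L)
    (e : G₂ ↪g G₁) {t : ℕ} (K : V₂ → Finset W) (hK : ∀ v, K v ⊆ L (e v))
    (hKcard : ∀ v, (K v).card = t) (h : DPColorable G₂ t) :
    ∃ S : Finset W, IsIndepFinset H S ∧ S.card = Fintype.card V₂ ∧ ∀ w ∈ S, ∃ v, w ∈ K v := by
  classical
  obtain ⟨S, hS, hcard⟩ := h _ inferInstance _ _ (hcov.restrict e K hK) fun v => by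
    rw [card_subtype, filter_true_of_mem fun w hw => ⟨v, hw⟩, hKcard]
  exact ⟨S.map (Function.Embedding.subtype _), by simpa [IsIndepFinset] using hS,
    by rw [card_map, hcard], by simpa using fun w v hv _ => ⟨v, hv⟩⟩

lemma card_le_alphaDP_of_embedding [Fintype V₁] [Fintype V₂] (e : G₂ ↪g G₁) {t : ℕ}
    (h : DPColorable G₂ t) : Fintype.card V₂ ≤ alphaDP G₁ t := by
  refine le_alphaDP fun W _ H L hcov hL => ?_
  obtain ⟨S, hS, hcard, -⟩ := hcov.exists_indep_of_embedding e (fun v => L (e v))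
    (fun v => subset_rfl) (fun v => hL (e v)) h
  exact ⟨S, hS, hcard.ge⟩

lemma DPColorable.succ_of_embedding [Fintype V₁] [Fintype V₂] {m : ℕ} (h : DPColorable G₂ m)
    (e : G₂ ↪g G₁) (z : V₁) (hz : ∀ v, G₁.Adj z (e v))
    (hcard : Fintype.card V₁ = Fintype.card V₂ + 1) : DPColorable G₁ (m + 1) := by
  classical
  intro W _ H L hcov hL
  obtain ⟨x, hx⟩ : (L z).Nonempty := by rw [← card_pos, hL]; omega
  have hK : ∀ v, ∃ K ⊆ (L (e v)).filter (¬ H.Adj x ·), K.card = m := fun v => by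
    apply exists_subset_card_eq
    have := card_filter_add_card_filter_not (s := L (e v)) (H.Adj x)
    have := hcov.card_filter_adj_le_one (hz v) hx
    have := hL (e v)
    omega
  choose K hKsub hKcard using hK
  obtain ⟨S, hS, hScard, hSK⟩ := hcov.exists_indep_of_embedding e K
    (fun v => (hKsub v).trans (filter_subset _ _)) hKcard h
  have hxS : ∀ w ∈ S, ¬ H.Adj x w ∧ x ≠ w := fun w hw => by
    obtain ⟨v, hv⟩ := hSK w hw
    obtain ⟨hwL, hxw⟩ := mem_filter.mp (hKsub v hv)
    refine ⟨hxw, ?_⟩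
    rintro rfl
    exact (hz v).ne (hcov.eq_of_mem hx hwL)
  exact ⟨insert x S, hS.insert fun w hw => (hxS w hw).1,
    by rw [card_insert_of_notMem fun h => (hxS x h).2 rfl, hScard, hcard]⟩

end Restrict

lemma exists_forall_ge_eq_add_of_succ_le {f : ℕ → ℕ} (hle : ∀ q, q ≤ f q)
    (hsucc : ∀ q, f (q + 1) ≤ f q + 1) : ∃ p₁ c, ∀ q, p₁ ≤ q → f q = q + c := by
  have hanti : Antitone fun q => f q - q :=
    antitone_nat_of_succ_le fun q => by have := hsucc q; omega
  obtain ⟨p₁, hp₁⟩ := Nat.sInf_mem (Set.range_nonempty fun q => f q - q)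
  refine ⟨p₁, f p₁ - p₁, fun q hq => ?_⟩
  have hmin : f p₁ - p₁ ≤ f q - q := hp₁.trans_le (Nat.sInf_le ⟨q, rfl⟩)
  have hmax : f q - q ≤ f p₁ - p₁ := hanti hq
  have := hle q
  omega

section Join

variable {V : Type} (G : SimpleGraph V)

def joinCompleteEmbedding {p q : ℕ} (h : q ≤ p) : joinComplete G q ↪g joinComplete G p where
  toFun := Sum.map id (Fin.castLE h)
  inj' := Function.injective_id.sumMap (Fin.castLE_injective h)
  map_rel_iff' := by
    rintro (a | a) (b | b)
    · exact Iff.rfl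
    · exact Iff.rfl
    · exact Iff.rfl
    · exact (Fin.castLE_injective h).ne_iff

lemma joinComplete_top (p : ℕ) : joinComplete (⊤ : SimpleGraph V) p = ⊤ := by
  ext (a | a) (b | b) <;> simp [joinComplete]

variable [Fintype V]

lemma le_chiDP_joinComplete (p : ℕ) : p ≤ chiDP (joinComplete G p) := by
  have hclique : (joinComplete G p).IsClique
      ↑(univ.map (Function.Embedding.inr : Fin p ↪ V ⊕ Fin p)) := by
    simp only [coe_map, coe_univ, Set.image_univ]
    rintro _ ⟨i, rfl⟩ _ ⟨j, rfl⟩ hij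
    exact fun h => hij (congrArg _ h)
  simpa using hclique.card_le_chiDP

lemma chiDP_joinComplete_succ_le (p : ℕ) :
    chiDP (joinComplete G (p + 1)) ≤ chiDP (joinComplete G p) + 1 := by
  refine chiDP_le_of_dpColorable <| (dpColorable_chiDP _).succ_of_embedding
    (joinCompleteEmbedding G p.le_succ) (.inr (Fin.last p)) ?_ (by simp; omega)
  rintro (a | a)
  · trivial
  · intro h
    have := congrArg Fin.val h
    simp only [Fin.val_last, Fin.val_castLE] at this
    omega

lemma exists_chiDP_joinComplete_eq_add :
    ∃ p₁ c, ∀ q, p₁ ≤ q → chiDP (joinComplete G q) = q + c :=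
  exists_forall_ge_eq_add_of_succ_le (le_chiDP_joinComplete G) (chiDP_joinComplete_succ_le G)

end Join

lemma partiallyDPNice_joinComplete {V : Type} [Fintype V] {G : SimpleGraph V} {u v : V}
    (huv : u ≠ v) (hnadj : ¬ G.Adj u v) {p₁ c p : ℕ}
    (hstab : ∀ q, p₁ ≤ q → chiDP (joinComplete G q) = q + c) (hp₁ : p₁ ≤ p)
    (hp : (c + p₁) * Fintype.card V ≤ p) : PartiallyDPNice (joinComplete G p) := by
  set n := Fintype.card V
  have hcard : Fintype.card (V ⊕ Fin p) = n + p := by simp [n]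
  have hchi : chiDP (joinComplete G p) = p + c := hstab p hp₁
  have hcn : c ≤ n := by have := chiDP_le_card (joinComplete G p); omega
  refine partiallyDPNice_of_mul_le fun t ht1 ht2 => ?_
  rw [hchi] at ht2
  rw [hcard, hchi]
  by_cases hlarge : c + p₁ ≤ t
  · obtain ⟨q, rfl⟩ : ∃ q, t = q + c := ⟨t - c, by omega⟩
    have hα : n + q ≤ alphaDP (joinComplete G p) (q + c) := by
      have h := card_le_alphaDP_of_embedding (joinCompleteEmbedding G (show q ≤ p by omega))
        (hstab q (by omega) ▸ dpColorable_chiDP _)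
      simpa [n] using h
    have hqp : q ≤ p := by omega
    nlinarith [Nat.mul_le_mul hqp hcn]
  · have hα := min_card_succ_le_alphaDP (G := joinComplete G p) (u := .inl u) (v := .inl v)
      (by simpa using huv) hnadj ht1
    rw [hcard] at hα
    have htn : t * n ≤ p := (Nat.mul_le_mul_right n (by omega)).trans hp
    rcases min_cases (n + p) (t + 1) with ⟨hmin, -⟩ | ⟨hmin, -⟩ <;> rw [hmin] at hα
    · nlinarith
    · nlinarith

/-- For any graph `G`, there exists a positive integer `p` such that `G ∨ K_p` is
partially DP-nice. -/
theorem exists_joinComplete_partiallyDPNice {V : Type} [Fintype V] (G : SimpleGraph V) :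
    ∃ p : ℕ, 0 < p ∧ PartiallyDPNice (joinComplete G p) := by
  by_cases hG : G = ⊤
  · refine ⟨1, one_pos, partiallyDPNice_of_chiDP_eq_card ?_⟩
    rw [hG, joinComplete_top, chiDP_top]
  · obtain ⟨u, v, huv, hnadj⟩ := ne_top_iff_exists_not_adj.mp hG
    obtain ⟨p₁, c, hstab⟩ := exists_chiDP_joinComplete_eq_add G
    exact ⟨p₁ + (c + p₁) * Fintype.card V + 1, by omega,
      partiallyDPNice_joinComplete huv hnadj hstab (by omega) (by omega)⟩
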